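/- arXiv:2106.01697 — 2 statements merged into one kernel-verified Lean document; each statement's English description precedes it below -/
import Mathlib

section
/- Let (X, ≠q) and (Y, ≠q) be quantum sets and Φ : X → Y a bijection. Then Φ is a strict quantum bijection (i.e., Φ({x}ᶜ) = {Φ(x)}ᶜ for every x ∈ X) if and only if the image map S ↦ Φ(S) induces an ortholattice isomorphism from 𝒬(X) onto 𝒬(Y), i.e. {Φ(S) : S ∈ 𝒬(X)} = 𝒬(Y) and Φ(Sᶜ) = Φ(S)ᶜ for every S ∈ 𝒬(X). -/
/-- The q-complement of a subset `D` with respect to a relation `q`. -/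
def qCompl {X : Type*} (q : X → X → Prop) (D : Set X) : Set X :=
  {y | ∀ z ∈ D, q y z}

/-- The collection of q-subsets of a quantum set. -/
def qSubsets {X : Type*} (q : X → X → Prop) : Set (Set X) :=
  {S | S = qCompl q (qCompl q S)}

lemma qCompl_anti {X : Type*} (q : X → X → Prop) {A B : Set X} (h : A ⊆ B) :
    qCompl q B ⊆ qCompl q A := fun y hy z hz => hy z (h hz)

lemma subset_cc {X : Type*} {q : X → X → Prop} (hs : ∀ x y, q x y → q y x)
    (A : Set X) : A ⊆ qCompl q (qCompl q A) :=
  fun a ha z hz => hs z a (hz a ha)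

lemma ccc {X : Type*} {q : X → X → Prop} (hs : ∀ x y, q x y → q y x)
    (A : Set X) : qCompl q (qCompl q (qCompl q A)) = qCompl q A :=
  Set.Subset.antisymm (qCompl_anti q (subset_cc hs A)) (subset_cc hs (qCompl q A))

lemma qCompl_mem_qSubsets {X : Type*} {q : X → X → Prop} (hs : ∀ x y, q x y → q y x)
    (A : Set X) : qCompl q A ∈ qSubsets q := (ccc hs A).symm

/-- `cc {x}` is contained in any q-subset containing `x`. -/
lemma cc_singleton_min {X : Type*} {q : X → X → Prop} {T : Set X}
    (hT : T ∈ qSubsets q) {x : X} (hx : x ∈ T) :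
    qCompl q (qCompl q {x}) ⊆ T := by
  have h1 : ({x} : Set X) ⊆ T := Set.singleton_subset_iff.mpr hx
  have h2 := qCompl_anti q (qCompl_anti q h1)
  rw [← hT] at h2
  exact h2

lemma image_qCompl {X Y : Type*} {qX : X → X → Prop} {qY : Y → Y → Prop}
    {Φ : X → Y} (hΦ : Function.Bijective Φ)
    (hx : ∀ x : X, Φ '' qCompl qX {x} = qCompl qY {Φ x}) (D : Set X) :
    Φ '' qCompl qX D = qCompl qY (Φ '' D) := by
  have key : ∀ x z : X, qX x z ↔ qY (Φ x) (Φ z) := by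
    intro x z
    have h1 : x ∈ qCompl qX {z} ↔ Φ x ∈ Φ '' qCompl qX {z} :=
      (Function.Injective.mem_set_image hΦ.1).symm
    rw [hx z] at h1
    simpa [qCompl] using h1
  ext y
  obtain ⟨x, rfl⟩ := hΦ.2 y
  rw [Function.Injective.mem_set_image hΦ.1]
  constructor
  · rintro h _ ⟨z, hz, rfl⟩
    exact (key x z).1 (h z hz)
  · intro h z hz
    exact (key x z).2 (h (Φ z) ⟨z, hz, rfl⟩)

/-- A bijection `Φ` between quantum sets is a strict quantum bijection (i.e.
`Φ({x}ᶜ) = {Φ x}ᶜ` for all `x`) if and only if the image map sends `𝒬(X)` onto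
`𝒬(Y)` and preserves q-complements of q-subsets, i.e. it induces an ortholattice
isomorphism `𝒬(X) ≅ 𝒬(Y)`. -/
theorem strict_quantum_bijection_iff_ortholattice_iso
    {X Y : Type*} (qX : X → X → Prop) (qY : Y → Y → Prop)
    (hsymmX : ∀ x y, qX x y → qX y x) (hneX : ∀ x y, qX x y → x ≠ y)
    (hsymmY : ∀ x y, qY x y → qY y x) (hneY : ∀ x y, qY x y → x ≠ y)
    (Φ : X → Y) (hΦ : Function.Bijective Φ) :
    (∀ x : X, Φ '' qCompl qX {x} = qCompl qY {Φ x}) ↔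
      ((Set.image Φ) '' qSubsets qX = qSubsets qY ∧
        ∀ S ∈ qSubsets qX, Φ '' qCompl qX S = qCompl qY (Φ '' S)) := by
  constructor
  · intro hx
    have hc := image_qCompl hΦ hx
    constructor
    · ext T
      constructor
      · rintro ⟨S, hS, rfl⟩
        show Φ '' S = _
        conv_lhs => rw [hS]
        rw [hc, hc]
      · intro hT
        refine ⟨Φ ⁻¹' T, ?_, Set.image_preimage_eq T hΦ.2⟩
        have himg : Φ '' (Φ ⁻¹' T) = T := Set.image_preimage_eq T hΦ.2
        have : Φ '' (qCompl qX (qCompl qX (Φ ⁻¹' T))) = Φ '' (Φ ⁻¹' T) := by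
          rw [hc, hc, himg, ← hT]
        exact ((Set.image_eq_image hΦ.1).mp this).symm
    · intro S _
      exact hc S
  · rintro ⟨h1, h2⟩ x
    -- First: Φ '' (cc {x}) = cc {Φ x}
    have hccX : qCompl qX (qCompl qX {x}) ∈ qSubsets qX :=
      qCompl_mem_qSubsets hsymmX _
    have himg_mem : Φ '' (qCompl qX (qCompl qX {x})) ∈ qSubsets qY := by
      rw [← h1]; exact ⟨_, hccX, rfl⟩
    have hxmem : Φ x ∈ Φ '' (qCompl qX (qCompl qX {x})) :=
      ⟨x, subset_cc hsymmX {x} rfl, rfl⟩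
    have hsub1 : qCompl qY (qCompl qY {Φ x}) ⊆ Φ '' (qCompl qX (qCompl qX {x})) :=
      cc_singleton_min himg_mem hxmem
    -- other inclusion via surjectivity of the lattice map
    have hccY : qCompl qY (qCompl qY {Φ x}) ∈ qSubsets qY :=
      qCompl_mem_qSubsets hsymmY _
    obtain ⟨S', hS', hS'eq⟩ : ∃ S' ∈ qSubsets qX,
        Φ '' S' = qCompl qY (qCompl qY {Φ x}) := by
      rw [← h1] at hccY
      obtain ⟨S', hS', h⟩ := hccY
      exact ⟨S', hS', h⟩
    have hxS' : x ∈ S' := by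
      have : Φ x ∈ Φ '' S' := by
        rw [hS'eq]; exact subset_cc hsymmY {Φ x} rfl
      exact (Function.Injective.mem_set_image hΦ.1).mp this
    have hsub2 : Φ '' (qCompl qX (qCompl qX {x})) ⊆ qCompl qY (qCompl qY {Φ x}) := by
      rw [← hS'eq]
      exact Set.image_mono (cc_singleton_min hS' hxS')
    have hcc : Φ '' (qCompl qX (qCompl qX {x})) = qCompl qY (qCompl qY {Φ x}) :=
      Set.Subset.antisymm hsub2 hsub1
    -- Now apply h2 to S = cc {x}
    have := h2 _ hccX
    rw [hcc] at this
    calc Φ '' qCompl qX {x}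
        = Φ '' qCompl qX (qCompl qX (qCompl qX {x})) := by rw [ccc hsymmX]
      _ = qCompl qY (qCompl qY (qCompl qY {Φ x})) := this
      _ = qCompl qY {Φ x} := ccc hsymmY _
end

section
/- Consider the quantum set (ℝ, ≠uc) where u ≠uc v iff |u − v| ≥ 1. Then the intervals T = [0,1] and S = [0,1/2] are both q-subsets of (ℝ, ≠uc), S ⊆ T, S ≠ T, and Sᶜ ∩ T = ∅. Consequently, (ℝ, ≠uc) is not hereditary and the complete ortholattice 𝒬(ℝ, ≠uc) is not orthomodular. -/
/-- A quantum set is hereditary if for every q-subset `T`, the q-subsets of `X`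
contained in `T` are exactly the q-subsets of `T` for the restricted relation. -/
def Hereditary {X : Type*} (q : X → X → Prop) : Prop :=
  ∀ T ∈ qSubsets q, ∀ S : Set X,
    (S ∈ qSubsets q ∧ S ⊆ T) ↔ (S ⊆ T ∧ S = qCompl q (qCompl q S ∩ T) ∩ T)

lemma qCompl_Icc (a b : ℝ) (h : a ≤ b) :
    qCompl (fun u v : ℝ => 1 ≤ |u - v|) (Set.Icc a b) = {y | y ≤ a - 1 ∨ b + 1 ≤ y} := by
  ext y
  simp only [qCompl, Set.mem_Icc, Set.mem_setOf_eq]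
  constructor
  · intro hy
    rcases le_total y a with h1 | h1
    · left
      have := hy a ⟨le_refl a, h⟩
      rw [le_abs] at this
      rcases this with h2 | h2 <;> linarith
    · rcases le_total y b with h2 | h2
      · have := hy y ⟨h1, h2⟩
        simp at this
        linarith
      · right
        have := hy b ⟨h, le_refl b⟩
        rw [le_abs] at this
        rcases this with h3 | h3 <;> linarith
  · rintro (hy | hy) z ⟨hz1, hz2⟩ <;> rw [le_abs]
    · right; linarith
    · left; linarith

lemma qCompl_rays (a b : ℝ) (h : a ≤ b) :
    qCompl (fun u v : ℝ => 1 ≤ |u - v|) {y | y ≤ a - 1 ∨ b + 1 ≤ y} = Set.Icc a b := by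
  ext y
  simp only [qCompl, Set.mem_Icc, Set.mem_setOf_eq]
  constructor
  · intro hy
    constructor
    · by_contra hlt
      push_neg at hlt
      rcases le_total y (a - 1) with h1 | h1
      · have := hy y (Or.inl h1)
        simp at this
        linarith
      · have := hy (a - 1) (Or.inl (le_refl _))
        rw [le_abs] at this
        rcases this with h2 | h2 <;> linarith
    · by_contra hlt
      push_neg at hlt
      rcases le_total (b + 1) y with h1 | h1
      · have := hy y (Or.inr h1)
        simp at this
        linarith
      · have := hy (b + 1) (Or.inr (le_refl _))
        rw [le_abs] at this
        rcases this with h2 | h2 <;> linarith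
  · rintro ⟨h1, h2⟩ z (hz | hz) <;> rw [le_abs]
    · left; linarith
    · right; linarith

lemma qCompl_empty {X : Type*} (q : X → X → Prop) : qCompl q (∅ : Set X) = Set.univ := by
  ext y; simp [qCompl]

/-- In the quantum set `(ℝ, ≠uc)` with `u ≠uc v` iff `|u - v| ≥ 1`, the intervals
`T = [0,1]` and `S = [0,1/2]` are q-subsets with `S ⊆ T`, `S ≠ T` and `Sᶜ ∩ T = ∅`.
Consequently `(ℝ, ≠uc)` is not hereditary and the complete ortholattice
`𝒬(ℝ, ≠uc)` is not orthomodular. -/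
theorem uncertainty_not_hereditary :
    (Set.Icc (0 : ℝ) 1 ∈ qSubsets (fun u v : ℝ => 1 ≤ |u - v|)) ∧
    (Set.Icc (0 : ℝ) (1/2) ∈ qSubsets (fun u v : ℝ => 1 ≤ |u - v|)) ∧
    Set.Icc (0 : ℝ) (1/2) ⊆ Set.Icc (0 : ℝ) 1 ∧
    Set.Icc (0 : ℝ) (1/2) ≠ Set.Icc (0 : ℝ) 1 ∧
    qCompl (fun u v : ℝ => 1 ≤ |u - v|) (Set.Icc (0 : ℝ) (1/2))
      ∩ Set.Icc (0 : ℝ) 1 = ∅ ∧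
    ¬ Hereditary (fun u v : ℝ => 1 ≤ |u - v|) ∧
    ¬ (∀ S ∈ qSubsets (fun u v : ℝ => 1 ≤ |u - v|),
        ∀ T ∈ qSubsets (fun u v : ℝ => 1 ≤ |u - v|), S ⊆ T →
          T = qCompl (fun u v : ℝ => 1 ≤ |u - v|)
                (qCompl (fun u v : ℝ => 1 ≤ |u - v|)
                  (S ∪ (T ∩ qCompl (fun u v : ℝ => 1 ≤ |u - v|) S)))) := by
  have h01 : (0:ℝ) ≤ 1 := by norm_num
  have h0h : (0:ℝ) ≤ 1/2 := by norm_num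
  have pT : Set.Icc (0 : ℝ) 1 ∈ qSubsets (fun u v : ℝ => 1 ≤ |u - v|) := by
    show _ = _
    rw [qCompl_Icc 0 1 h01, qCompl_rays 0 1 h01]
  have pS : Set.Icc (0 : ℝ) (1/2) ∈ qSubsets (fun u v : ℝ => 1 ≤ |u - v|) := by
    show _ = _
    rw [qCompl_Icc 0 (1/2) h0h, qCompl_rays 0 (1/2) h0h]
  have psub : Set.Icc (0 : ℝ) (1/2) ⊆ Set.Icc (0 : ℝ) 1 :=
    Set.Icc_subset_Icc (le_refl 0) (by norm_num)
  have pne : Set.Icc (0 : ℝ) (1/2) ≠ Set.Icc (0 : ℝ) 1 := by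
    intro h
    have : (1:ℝ) ∈ Set.Icc (0:ℝ) (1/2) := by rw [h]; exact ⟨by norm_num, le_refl 1⟩
    have := this.2
    linarith
  have pdisj : qCompl (fun u v : ℝ => 1 ≤ |u - v|) (Set.Icc (0 : ℝ) (1/2))
      ∩ Set.Icc (0 : ℝ) 1 = ∅ := by
    rw [qCompl_Icc 0 (1/2) h0h]
    rw [Set.eq_empty_iff_forall_notMem]
    rintro y ⟨(h1 | h1), h2, h3⟩ <;> linarith
  refine ⟨pT, pS, psub, pne, pdisj, ?_, ?_⟩
  · intro H
    have := ((H (Set.Icc (0:ℝ) 1) pT (Set.Icc (0:ℝ) (1/2))).mp ⟨pS, psub⟩).2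
    rw [pdisj, qCompl_empty, Set.univ_inter] at this
    exact pne this
  · intro H
    have := H (Set.Icc (0:ℝ) (1/2)) pS (Set.Icc (0:ℝ) 1) pT psub
    rw [Set.inter_comm, pdisj, Set.union_empty, ← pS] at this
    exact pne this.symm
end
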